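/- Let m = n = 5, r = 2, and let Ω ⊆ [5] × [5] be the set with incidence matrix rows (1,1,1,0,0), (1,1,1,0,0), (1,1,0,1,1), (0,0,1,1,1), (0,0,1,1,1). Let f be the 3-minor of Z on rows {1,2,3} and columns {1,2,3}, and g the 3-minor on rows {3,4,5} and columns {3,4,5}. Writing f = f_1·z_{33} + f_2 and g = g_1·z_{33} + g_2 with f_1, f_2, g_1, g_2 ∈ k[Z_Ω], the polynomial g_1·f_2 − f_1·g_2 is a nonzero element of the elimination ideal I_3(Z) ∩ k[Z_Ω]. Consequently Ω is a dependent set of the determinantal matroid M(2, [5] × [5]). -/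
import Mathlib


open MvPolynomial

/-- The ideal of `(r+1)`-minors of the generic `m × n` matrix of variables. -/
noncomputable def detIdeal (k : Type*) [CommRing k] (m n r : ℕ) :
    Ideal (MvPolynomial (Fin m × Fin n) k) :=
  Ideal.span { p | ∃ f : Fin (r + 1) → Fin m, ∃ g : Fin (r + 1) → Fin n,
    Function.Injective f ∧ Function.Injective g ∧
    p = (Matrix.of fun i j => (X (f i, g j) : MvPolynomial (Fin m × Fin n) k)).det }

/-- The incidence matrix of Example 3.2 of the paper. -/
def exampleMatrix : Matrix (Fin 5) (Fin 5) ℕ :=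
  !![1,1,1,0,0;
     1,1,1,0,0;
     1,1,0,1,1;
     0,0,1,1,1;
     0,0,1,1,1]

/-- The subset `Ω ⊆ [5] × [5]` given by the incidence matrix. -/
def exampleOmega : Finset (Fin 5 × Fin 5) :=
  Finset.univ.filter (fun p => exampleMatrix p.1 p.2 = 1)

/-- The 3-minor of `Z` on rows `{1,2,3}` and columns `{1,2,3}` (0-based: `{0,1,2}`). -/
noncomputable def fMinor (k : Type*) [Field k] : MvPolynomial (Fin 5 × Fin 5) k :=
  (Matrix.of fun i j : Fin 3 =>
    (X (Fin.castLE (by omega) i, Fin.castLE (by omega) j) : MvPolynomial (Fin 5 × Fin 5) k)).det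

/-- The 3-minor of `Z` on rows `{3,4,5}` and columns `{3,4,5}` (0-based: `{2,3,4}`). -/
noncomputable def gMinor (k : Type*) [Field k] : MvPolynomial (Fin 5 × Fin 5) k :=
  (Matrix.of fun i j : Fin 3 =>
    (X ((⟨i.val + 2, by omega⟩ : Fin 5), (⟨j.val + 2, by omega⟩ : Fin 5)) :
      MvPolynomial (Fin 5 × Fin 5) k)).det

/-- An assignment of values to the variables, with `z₃₃ := t`. -/
def asgn (k : Type*) [Field k] (t : k) : Fin 5 × Fin 5 → k := fun p =>
  if p = (2,2) then t
  else if p = (0,0) ∨ p = (1,1) ∨ p = (2,3) ∨ p = (3,2) ∨ p = (4,4) then 1 else 0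

lemma eval_asgn_fMinor {k : Type*} [Field k] (t : k) : eval (asgn k t) (fMinor k) = t := by
  simp (config := { decide := true }) [fMinor, Matrix.det_fin_three, asgn]

lemma eval_asgn_gMinor {k : Type*} [Field k] (t : k) : eval (asgn k t) (gMinor k) = -1 := by
  simp (config := { decide := true }) [gMinor, Matrix.det_fin_three, asgn]

lemma eval_congr_supported {k : Type*} [CommSemiring k] {σ : Type*} {s : Set σ}
    {p : MvPolynomial σ k} (h : p ∈ supported k s)
    {a b : σ → k} (hab : ∀ i ∈ s, a i = b i) : eval a p = eval b p := by
  rw [supported_eq_range_rename] at h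
  obtain ⟨q, rfl⟩ := h
  simp only [AlgHom.toRingHom_eq_coe, RingHom.coe_coe, eval_rename]
  have : a ∘ Subtype.val = b ∘ (Subtype.val : s → σ) :=
    funext fun i => hab i i.2
  rw [this]

lemma asgn_agree {k : Type*} [Field k] (t t' : k) :
    ∀ i ∈ (↑exampleOmega : Set (Fin 5 × Fin 5)), asgn k t i = asgn k t' i := by
  intro i hi
  have hne : i ≠ ((2 : Fin 5), (2 : Fin 5)) := by
    rintro rfl
    revert hi
    decide
  simp [asgn, hne]

/-- Writing `f = f₁ z₃₃ + f₂` and `g = g₁ z₃₃ + g₂` with `f₁, f₂, g₁, g₂ ∈ k[Z_Ω]`, the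
polynomial `g₁ f₂ - f₁ g₂` is a nonzero element of the elimination ideal
`I₃(Z) ∩ k[Z_Ω]`; hence `Ω` is dependent in `M(2, [5] × [5])`. -/
theorem example_dependent {k : Type*} [Field k] [Infinite k]
    (f1 f2 g1 g2 : MvPolynomial (Fin 5 × Fin 5) k)
    (hf1 : f1 ∈ MvPolynomial.supported k (↑exampleOmega : Set (Fin 5 × Fin 5)))
    (hf2 : f2 ∈ MvPolynomial.supported k (↑exampleOmega : Set (Fin 5 × Fin 5)))
    (hg1 : g1 ∈ MvPolynomial.supported k (↑exampleOmega : Set (Fin 5 × Fin 5)))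
    (hg2 : g2 ∈ MvPolynomial.supported k (↑exampleOmega : Set (Fin 5 × Fin 5)))
    (hf : fMinor k = f1 * X ((2 : Fin 5), (2 : Fin 5)) + f2)
    (hg : gMinor k = g1 * X ((2 : Fin 5), (2 : Fin 5)) + g2) :
    g1 * f2 - f1 * g2 ≠ 0 ∧
    g1 * f2 - f1 * g2 ∈ detIdeal k 5 5 2 ∧
    g1 * f2 - f1 * g2 ∈ MvPolynomial.supported k (↑exampleOmega : Set (Fin 5 × Fin 5)) := by
  refine ⟨?_, ?_, ?_⟩
  · -- nonzero: evaluate at the assignments `asgn k 0` and `asgn k 1`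
    intro h0
    have hX0 : eval (asgn k 0) (X ((2 : Fin 5), (2 : Fin 5)) : MvPolynomial (Fin 5 × Fin 5) k)
        = 0 := by simp [asgn]
    have hX1 : eval (asgn k 1) (X ((2 : Fin 5), (2 : Fin 5)) : MvPolynomial (Fin 5 × Fin 5) k)
        = 1 := by simp [asgn]
    have hf0 := congrArg (eval (asgn k 0)) hf
    have hf1' := congrArg (eval (asgn k 1)) hf
    have hg0 := congrArg (eval (asgn k 0)) hg
    have hg1' := congrArg (eval (asgn k 1)) hg
    rw [eval_asgn_fMinor, map_add, map_mul, hX0] at hf0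
    rw [eval_asgn_fMinor, map_add, map_mul, hX1] at hf1'
    rw [eval_asgn_gMinor, map_add, map_mul, hX0] at hg0
    rw [eval_asgn_gMinor, map_add, map_mul, hX1] at hg1'
    rw [eval_congr_supported hf1 (asgn_agree 1 0),
        eval_congr_supported hf2 (asgn_agree 1 0)] at hf1'
    rw [eval_congr_supported hg1 (asgn_agree 1 0),
        eval_congr_supported hg2 (asgn_agree 1 0)] at hg1'
    have h0' := congrArg (eval (asgn k 0)) h0
    rw [map_sub, map_mul, map_mul, map_zero] at h0'
    set A := eval (asgn k 0) f1
    set B := eval (asgn k 0) f2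
    set C := eval (asgn k 0) g1
    set D := eval (asgn k 0) g2
    -- hf0 : 0 = A*0 + B, hf1' : 1 = A*1 + B, hg0 : -1 = C*0 + D, hg1' : -1 = C*1 + D
    have hB : B = 0 := by linear_combination -hf0
    have hA : A = 1 := by linear_combination hf0 - hf1'
    have hD : D = -1 := by linear_combination -hg0
    have hC : C = 0 := by linear_combination hg0 - hg1'
    rw [hA, hB, hC, hD] at h0'
    simp at h0'
  · -- membership in the determinantal ideal
    have key : g1 * f2 - f1 * g2 = g1 * fMinor k - f1 * gMinor k := by
      rw [hf, hg]; ring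
    rw [key]
    have hfmem : fMinor k ∈ detIdeal k 5 5 2 := by
      apply Ideal.subset_span
      exact ⟨fun i => Fin.castLE (show 2 + 1 ≤ 5 by omega) i, fun j => Fin.castLE (show 2 + 1 ≤ 5 by omega) j,
        Fin.castLE_injective (by omega), Fin.castLE_injective (by omega), rfl⟩
    have hgmem : gMinor k ∈ detIdeal k 5 5 2 := by
      apply Ideal.subset_span
      refine ⟨fun i => (⟨i.val + 2, by omega⟩ : Fin 5), fun j => (⟨j.val + 2, by omega⟩ : Fin 5),
        ?_, ?_, rfl⟩ <;>
      · intro a b hab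
        have := Fin.mk.injEq .. ▸ hab
        exact Fin.ext (by omega)
    exact sub_mem (Ideal.mul_mem_left _ _ hfmem) (Ideal.mul_mem_left _ _ hgmem)
  · exact sub_mem (mul_mem hg1 hf2) (mul_mem hf1 hg2)
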